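/- Let L be a discrete join semilattice (every maximal chain in every closed interval is finite). If the up-down distance d(x,y) = h(x, x∨y) + h(y, x∨y) satisfies the triangle inequality on L, then it coincides with the zigzag distance: for all x, y in L, h(x, x∨y) + h(y, x∨y) equals the graph distance between x and y in the Hasse diagram of L. -/

import Mathlib

/-- `C` is a maximal chain within the set `I`: a chain contained in `I` not properly
contained in any other chain contained in `I`. -/
def IsMaxChainIn {P : Type*} [PartialOrder P] (I C : Set P) : Prop :=
  C ⊆ I ∧ IsChain (· ≤ ·) C ∧
    ∀ ⦃C' : Set P⦄, C' ⊆ I → IsChain (· ≤ ·) C' → C ⊆ C' → C' = C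

/-- A poset is discrete if every maximal chain of every closed interval `[x,y]` is finite. -/
def IsDiscretePoset (P : Type*) [PartialOrder P] : Prop :=
  ∀ x y : P, ∀ C : Set P, IsMaxChainIn (Set.Icc x y) C → C.Finite

/-- The height of `y` above `x`: the least cardinality of a finite maximal chain of the
interval `[x,y]`, minus 1. -/
noncomputable def intervalHeight {P : Type*} [PartialOrder P] (x y : P) : ℕ :=
  sInf {n : ℕ | ∃ C : Set P, IsMaxChainIn (Set.Icc x y) C ∧ C.Finite ∧ C.ncard = n + 1}

/-- The Jordan–Dedekind chain condition: in every interval `[x,y]`, all maximal chains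
have the same number of elements. -/
def JordanDedekind (P : Type*) [PartialOrder P] : Prop :=
  ∀ x y : P, ∀ C C' : Set P, IsMaxChainIn (Set.Icc x y) C →
    IsMaxChainIn (Set.Icc x y) C' → C.ncard = C'.ncard

/-- The Hasse diagram of a poset: the simple undirected graph with an edge between `a`
and `b` iff one covers the other. -/
def hasseGraph (P : Type*) [PartialOrder P] : SimpleGraph P where
  Adj a b := a ⋖ b ∨ b ⋖ a
  symm := ⟨fun a b h => h.symm⟩
  loopless := ⟨fun a h => by rcases h with h | h <;> exact h.ne rfl⟩

/-- A join semilattice is semimodular if whenever some element `z` is covered by both of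
the distinct elements `x` and `y`, the join `x ⊔ y` covers both `x` and `y`. -/
def Semimodular (L : Type*) [SemilatticeSup L] : Prop :=
  ∀ x y z : L, x ≠ y → z ⋖ x → z ⋖ y → x ⋖ x ⊔ y ∧ y ⋖ x ⊔ y

section Aux

variable {P : Type*} [PartialOrder P]

lemma mem_of_isMaxChainIn {a b : P} (hab : a ≤ b) {C : Set P}
    (hC : IsMaxChainIn (Set.Icc a b) C) : a ∈ C ∧ b ∈ C := by
  have hchain : IsChain (· ≤ ·) (C ∪ {a, b}) := by
    intro x hx y hy hne
    have key : ∀ u ∈ Set.Icc a b, ∀ v ∈ ({a, b} : Set P), u ≤ v ∨ v ≤ u := by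
      rintro u hu v (rfl | rfl)
      · exact Or.inr hu.1
      · exact Or.inl hu.2
    rcases hx with hx | hx <;> rcases hy with hy | hy
    · exact hC.2.1 hx hy hne
    · exact key x (hC.1 hx) y hy
    · exact (key y (hC.1 hy) x hx).symm
    · rcases hx with rfl | rfl <;> rcases hy with rfl | rfl
      · exact absurd rfl hne
      · exact Or.inl hab
      · exact Or.inr hab
      · exact absurd rfl hne
  have hsub : C ∪ {a, b} ⊆ Set.Icc a b := by
    rintro x (hx | hx)
    · exact hC.1 hx
    · rcases hx with rfl | rfl
      · exact ⟨le_rfl, hab⟩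
      · exact ⟨hab, le_rfl⟩
  have heq := hC.2.2 hsub hchain Set.subset_union_left
  constructor
  · rw [← heq]; exact Or.inr (Or.inl rfl)
  · rw [← heq]; exact Or.inr (Or.inr rfl)

lemma exists_isMaxChainIn {a b : P} (hab : a ≤ b) :
    ∃ C, IsMaxChainIn (Set.Icc a b) C := by
  obtain ⟨M, -, hM⟩ := zorn_subset_nonempty
      {C : Set P | C ⊆ Set.Icc a b ∧ IsChain (· ≤ ·) C}
      (fun c hcS hc _hne => by
        refine ⟨⋃₀ c, ⟨?_, ?_⟩, fun s hs => Set.subset_sUnion_of_mem hs⟩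
        · exact Set.sUnion_subset fun s hs => (hcS hs).1
        · intro x hx y hy hne
          obtain ⟨s, hs, hxs⟩ := hx
          obtain ⟨t, ht, hyt⟩ := hy
          rcases eq_or_ne s t with rfl | hst
          · exact (hcS hs).2 hxs hyt hne
          · rcases hc hs ht hst with h | h
            · exact (hcS ht).2 (h hxs) hyt hne
            · exact (hcS hs).2 hxs (h hyt) hne)
      ∅ ⟨Set.empty_subset _, IsChain.empty⟩
  exact ⟨M, hM.prop.1, hM.prop.2,
    fun C' hsub hchain hMC' => Set.Subset.antisymm (hM.2 ⟨hsub, hchain⟩ hMC') hMC'⟩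

lemma heightSet_nonempty (hdisc : IsDiscretePoset P) {a b : P} (hab : a ≤ b) :
    {n : ℕ | ∃ C : Set P, IsMaxChainIn (Set.Icc a b) C ∧ C.Finite ∧ C.ncard = n + 1}.Nonempty := by
  obtain ⟨C, hC⟩ := exists_isMaxChainIn hab
  have hfin : C.Finite := hdisc a b C hC
  have hne : C.Nonempty := ⟨a, (mem_of_isMaxChainIn hab hC).1⟩
  have hpos : 0 < C.ncard := hne.ncard_pos hfin
  exact ⟨C.ncard - 1, C, hC, hfin, by omega⟩

lemma intervalHeight_spec (hdisc : IsDiscretePoset P) {a b : P} (hab : a ≤ b) :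
    ∃ C, IsMaxChainIn (Set.Icc a b) C ∧ C.Finite ∧ C.ncard = intervalHeight a b + 1 :=
  Nat.sInf_mem (heightSet_nonempty hdisc hab)

lemma intervalHeight_self (a : P) : intervalHeight a a = 0 := by
  have h0 : (0 : ℕ) ∈
      {n : ℕ | ∃ C : Set P, IsMaxChainIn (Set.Icc a a) C ∧ C.Finite ∧ C.ncard = n + 1} := by
    refine ⟨{a}, ⟨?_, Set.subsingleton_singleton.isChain, ?_⟩, Set.finite_singleton a, by simp⟩
    · rw [Set.Icc_self]
    · intro C' hsub _ hsup
      rw [Set.Icc_self] at hsub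
      exact hsub.antisymm hsup
  exact Nat.le_zero.mp (Nat.sInf_le h0)

lemma eq_of_intervalHeight_eq_zero (hdisc : IsDiscretePoset P) {a b : P} (hab : a ≤ b)
    (h : intervalHeight a b = 0) : a = b := by
  obtain ⟨C, hC, _, hcard⟩ := intervalHeight_spec hdisc hab
  rw [h] at hcard
  obtain ⟨c, rfl⟩ := Set.ncard_eq_one.mp hcard
  obtain ⟨ha, hb⟩ := mem_of_isMaxChainIn hab hC
  rw [Set.mem_singleton_iff] at ha hb
  rw [ha, hb]

lemma intervalHeight_covBy (hdisc : IsDiscretePoset P) {a b : P} (h : a ⋖ b) :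
    intervalHeight a b = 1 := by
  have h1 : intervalHeight a b ≤ 1 := by
    refine Nat.sInf_le ⟨{a, b}, ⟨?_, ?_, ?_⟩, (Set.finite_singleton a).insert b |>.subset (by
      intro x hx; rcases hx with rfl | rfl <;> simp), Set.ncard_pair h.ne⟩
    · rintro x (rfl | rfl)
      · exact ⟨le_rfl, h.le⟩
      · exact ⟨h.le, le_rfl⟩
    · rintro x (rfl | rfl) y (rfl | rfl) hne
      · exact absurd rfl hne
      · exact Or.inl h.le
      · exact Or.inr h.le
      · exact absurd rfl hne
    · intro C' hsub _ hsup
      apply Set.Subset.antisymm _ hsup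
      intro c hc
      rcases h.eq_or_eq (hsub hc).1 (hsub hc).2 with rfl | rfl
      · exact Or.inl rfl
      · exact Or.inr rfl
  have h0 : intervalHeight a b ≠ 0 := fun h0 =>
    h.ne (eq_of_intervalHeight_eq_zero hdisc h.le h0)
  omega

lemma reachable_and_dist_le (hdisc : IsDiscretePoset P) :
    ∀ n : ℕ, ∀ a b : P, a ≤ b → intervalHeight a b ≤ n →
      (hasseGraph P).Reachable a b ∧ (hasseGraph P).dist a b ≤ n := by
  intro n
  induction n with
  | zero =>
    intro a b hab hle
    obtain rfl := eq_of_intervalHeight_eq_zero hdisc hab (Nat.le_zero.mp hle)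
    exact ⟨SimpleGraph.Reachable.refl a, by simp [SimpleGraph.dist_self]⟩
  | succ n ih =>
    intro a b hab hle
    rcases eq_or_ne a b with rfl | hne
    · exact ⟨SimpleGraph.Reachable.refl a, by simp [SimpleGraph.dist_self]⟩
    obtain ⟨C, hC, hfin, hcard⟩ := intervalHeight_spec hdisc hab
    obtain ⟨haC, hbC⟩ := mem_of_isMaxChainIn hab hC
    set D := C \ {a} with hD
    have hDfin : D.Finite := hfin.subset Set.diff_subset
    have hDne : D.Nonempty := ⟨b, hbC, fun hb => hne (by simpa using hb.symm)⟩
    obtain ⟨a', ha'D, hmin⟩ : ∃ a' ∈ D, ∀ c ∈ D, c ≤ a' → a' = c := by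
      obtain ⟨m, hm⟩ := hDfin.exists_minimal hDne
      exact ⟨m, hm.prop, fun c hc h => hm.eq_of_ge hc h⟩
    have hle' : ∀ c ∈ D, a' ≤ c := by
      intro c hc
      rcases eq_or_ne a' c with rfl | hne'
      · exact le_rfl
      rcases hC.2.1 ha'D.1 hc.1 hne' with h | h
      · exact h
      · exact (hmin c hc h).le
    have haa' : a < a' := lt_of_le_of_ne (hC.1 ha'D.1).1 (Ne.symm ha'D.2)
    have ha'b : a' ≤ b := (hC.1 ha'D.1).2
    have hcov : a ⋖ a' := by
      refine ⟨haa', fun t hat hta' => ?_⟩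
      have htC : t ∉ C := by
        intro htC
        have : t ∈ D := ⟨htC, fun h => (lt_irrefl a) (by simpa [Set.mem_singleton_iff.mp h] using hat)⟩
        exact hta'.not_ge (hle' t this)
      have hchain : IsChain (· ≤ ·) (C ∪ {t}) := by
        rintro x (hx | rfl) y (hy | rfl) hne2
        · exact hC.2.1 hx hy hne2
        · rcases eq_or_ne x a with rfl | hxa
          · exact Or.inl hat.le
          · exact Or.inr (hta'.le.trans (hle' x ⟨hx, hxa⟩))
        · rcases eq_or_ne y a with rfl | hya
          · exact Or.inr hat.le
          · exact Or.inl (hta'.le.trans (hle' y ⟨hy, hya⟩))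
        · exact absurd rfl hne2
      have hsub : C ∪ {t} ⊆ Set.Icc a b := by
        rintro x (hx | rfl)
        · exact hC.1 hx
        · exact ⟨hat.le, hta'.le.trans ha'b⟩
      have := hC.2.2 hsub hchain Set.subset_union_left
      exact htC (this ▸ Or.inr rfl)
    have haD : a ∉ D := fun h => h.2 rfl
    have hDmax : IsMaxChainIn (Set.Icc a' b) D := by
      refine ⟨fun c hc => ⟨hle' c hc, (hC.1 hc.1).2⟩, hC.2.1.mono Set.diff_subset, ?_⟩
      intro C' hsub hchain hDC'
      have haC' : a ∉ C' := fun h => haa'.not_ge (hsub h).1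
      have hchain' : IsChain (· ≤ ·) (C' ∪ {a}) := by
        rintro x (hx | rfl) y (hy | rfl) hne2
        · exact hchain hx hy hne2
        · exact Or.inr (haa'.le.trans (hsub hx).1)
        · exact Or.inl (haa'.le.trans (hsub hy).1)
        · exact absurd rfl hne2
      have hsub' : C' ∪ {a} ⊆ Set.Icc a b := by
        rintro x (hx | rfl)
        · exact ⟨haa'.le.trans (hsub hx).1, (hsub hx).2⟩
        · exact ⟨le_rfl, hab⟩
      have hCsub : C ⊆ C' ∪ {a} := by
        intro c hc
        rcases eq_or_ne c a with rfl | hca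
        · exact Or.inr rfl
        · exact Or.inl (hDC' ⟨hc, hca⟩)
      have heq : C' ∪ {a} = C := hC.2.2 hsub' hchain' hCsub
      apply Set.Subset.antisymm _ hDC'
      intro c hc
      refine ⟨heq ▸ Or.inl hc, fun h => haC' ?_⟩
      rwa [Set.mem_singleton_iff.mp h] at hc
    have hcardD : D.ncard = intervalHeight a b := by
      rw [hD, Set.ncard_diff_singleton_of_mem haC, hcard]; omega
    have hpos : 1 ≤ intervalHeight a b := by
      rcases Nat.eq_zero_or_pos (intervalHeight a b) with h0 | h0
      · exact absurd (eq_of_intervalHeight_eq_zero hdisc hab h0) hne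
      · exact h0
    have hht : intervalHeight a' b ≤ n := by
      have : intervalHeight a' b ≤ intervalHeight a b - 1 :=
        Nat.sInf_le ⟨D, hDmax, hDfin, by omega⟩
      omega
    obtain ⟨hr, hd⟩ := ih a' b ha'b hht
    have hadj : (hasseGraph P).Adj a a' := Or.inl hcov
    refine ⟨hadj.reachable.trans hr, ?_⟩
    obtain ⟨p, hp⟩ := hr.exists_walk_length_eq_dist
    have := SimpleGraph.dist_le (SimpleGraph.Walk.cons hadj p)
    simp only [SimpleGraph.Walk.length_cons, hp] at this
    omega

end Aux

/-- In a discrete join semilattice, if the up–down distance satisfies the triangle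
inequality then it coincides with the zigzag distance. -/
theorem stmt11 {L : Type*} [SemilatticeSup L]
    (hdisc : IsDiscretePoset L)
    (htri : ∀ x y z : L,
      intervalHeight x (x ⊔ z) + intervalHeight z (x ⊔ z) ≤
        (intervalHeight x (x ⊔ y) + intervalHeight y (x ⊔ y)) +
        (intervalHeight y (y ⊔ z) + intervalHeight z (y ⊔ z))) :
    ∀ x y : L,
      intervalHeight x (x ⊔ y) + intervalHeight y (x ⊔ y) = (hasseGraph L).dist x y := by
  have hd_adj : ∀ x y : L, (hasseGraph L).Adj x y →
      intervalHeight x (x ⊔ y) + intervalHeight y (x ⊔ y) = 1 := by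
    intro x y hadj
    rcases hadj with h | h
    · rw [sup_eq_right.mpr h.le, intervalHeight_covBy hdisc h, intervalHeight_self]
    · rw [sup_eq_left.mpr h.le, intervalHeight_self, intervalHeight_covBy hdisc h]
  have hwalk : ∀ (x y : L) (p : (hasseGraph L).Walk x y),
      intervalHeight x (x ⊔ y) + intervalHeight y (x ⊔ y) ≤ p.length := by
    intro x y p
    induction p with
    | nil => simp [intervalHeight_self]
    | @cons u v w hadj q ih =>
      calc intervalHeight u (u ⊔ w) + intervalHeight w (u ⊔ w)
          ≤ (intervalHeight u (u ⊔ v) + intervalHeight v (u ⊔ v)) +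
            (intervalHeight v (v ⊔ w) + intervalHeight w (v ⊔ w)) := htri u v w
        _ ≤ 1 + q.length := by rw [hd_adj u v hadj]; omega
        _ = (SimpleGraph.Walk.cons hadj q).length := by
            rw [SimpleGraph.Walk.length_cons]; omega
  intro x y
  obtain ⟨hr1, hd1⟩ := reachable_and_dist_le hdisc (intervalHeight x (x ⊔ y)) x (x ⊔ y)
    le_sup_left le_rfl
  obtain ⟨hr2, hd2⟩ := reachable_and_dist_le hdisc (intervalHeight y (x ⊔ y)) y (x ⊔ y)
    le_sup_right le_rfl
  have hreach : (hasseGraph L).Reachable x y := hr1.trans hr2.symm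
  apply le_antisymm
  · obtain ⟨p, hp⟩ := hreach.exists_walk_length_eq_dist
    calc intervalHeight x (x ⊔ y) + intervalHeight y (x ⊔ y) ≤ p.length := hwalk x y p
      _ = (hasseGraph L).dist x y := hp
  · obtain ⟨p, hp⟩ := hr1.exists_walk_length_eq_dist
    obtain ⟨q, hq⟩ := hr2.exists_walk_length_eq_dist
    have := SimpleGraph.dist_le (p.append q.reverse)
    rw [SimpleGraph.Walk.length_append, SimpleGraph.Walk.length_reverse, hp, hq] at this
    omega
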